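/- arXiv:2510.17343 — 4 statements merged into one kernel-verified Lean document; each statement's English description precedes it below -/
import Mathlib

section
/- Lemma 4.1, direct part: let ν be a nonzero σ-finite Borel measure on (0,∞) with ∫_{(0,∞)} min(x,1) ν(dx) < ∞, and define Φ(t) = ∫_{(0,∞)} (1 − exp(−t(1 − e^{−x}))) ν(dx) for t > 0. Let c > 0. If for every λ > 0, lim_{t→∞} (Φ(λt) − Φ(t)) = c·log λ, then for every integer r ≥ 1, lim_{t→∞} (−1)^{r+1} t^r Φ^{(r)}(t) = c·(r−1)!, where Φ^{(r)} denotes the r-th derivative of Φ. -/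
/-!
Differentiating under the integral sign (the integrands are dominated by multiples of
`min x 1`), `(-1)^(r+1) Φ^(r)(t) = ∫ gʳ e^{-t g} dν` with `g x = 1 - e^{-x}`; these functions are
nonnegative, hence nonincreasing in `t`. The limits then follow by induction on `r` from a
monotone density argument: if `G' = -H` with `H` nonincreasing and
`tʳ (G t - G (l t)) → A l` for `l > 1`, the mean value theorem gives
`(l - 1) t^(r+1) H (l t) ≤ tʳ (G t - G (l t)) ≤ (l - 1) t^(r+1) H t`, and letting `l ↓ 1`
yields `t^(r+1) H t → A'(1)`. The induction starts from `G = -Φ`, `A l = c log l`.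
-/

open Filter MeasureTheory Set Real Topology

section MonotoneDensity

variable {G H : ℝ → ℝ} {r : ℕ} {A : ℝ → ℝ} {L : ℝ}

theorem sub_mul_le_sub_and_sub_le_sub_mul (hH : Antitone H) (hG : ∀ t, HasDerivAt G (-H t) t)
    {t s : ℝ} (hts : t < s) :
    (s - t) * H s ≤ G t - G s ∧ G t - G s ≤ (s - t) * H t := by
  obtain ⟨ξ, hξ, hslope⟩ := exists_hasDerivAt_eq_slope G (fun u => -H u) hts
    (fun u _ => (hG u).continuousAt.continuousWithinAt) (fun u _ => hG u)
  have hGξ : G t - G s = (s - t) * H ξ := by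
    rw [eq_div_iff (sub_pos.2 hts).ne'] at hslope
    linarith
  rw [hGξ]
  exact ⟨mul_le_mul_of_nonneg_left (hH hξ.2.le) (sub_pos.2 hts).le,
    mul_le_mul_of_nonneg_left (hH hξ.1.le) (sub_pos.2 hts).le⟩

theorem eventually_lt_pow_succ_mul (hH : Antitone H) (hG : ∀ t, HasDerivAt G (-H t) t)
    (hGA : ∀ l, 1 < l → Tendsto (fun t => t ^ r * (G t - G (l * t))) atTop (𝓝 (A l)))
    (hA : Tendsto (fun l => A l / (l - 1)) (𝓝[>] 1) (𝓝 L)) {b : ℝ} (hb : b < L) :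
    ∀ᶠ t in atTop, b < t ^ (r + 1) * H t := by
  obtain ⟨l, hbl, hl⟩ := ((hA.eventually (eventually_gt_nhds hb)).and self_mem_nhdsWithin).exists
  have hl1 : 0 < l - 1 := sub_pos.2 hl
  have hbA : b * (l - 1) < A l := (lt_div_iff₀ hl1).1 hbl
  filter_upwards [(hGA l hl).eventually (eventually_gt_nhds hbA), eventually_gt_atTop 0]
    with t hbt ht
  have hGH := (sub_mul_le_sub_and_sub_le_sub_mul hH hG (lt_mul_left ht hl)).2
  have : b * (l - 1) < (l - 1) * (t ^ (r + 1) * H t) :=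
    calc b * (l - 1) < t ^ r * (G t - G (l * t)) := hbt
      _ ≤ t ^ r * ((l * t - t) * H t) := mul_le_mul_of_nonneg_left hGH (by positivity)
      _ = (l - 1) * (t ^ (r + 1) * H t) := by ring
  nlinarith

theorem eventually_pow_succ_mul_lt (hH : Antitone H) (hG : ∀ t, HasDerivAt G (-H t) t)
    (hGA : ∀ l, 1 < l → Tendsto (fun t => t ^ r * (G t - G (l * t))) atTop (𝓝 (A l)))
    (hA : Tendsto (fun l => A l / (l - 1)) (𝓝[>] 1) (𝓝 L)) {b : ℝ} (hb : L < b) :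
    ∀ᶠ s in atTop, s ^ (r + 1) * H s < b := by
  -- compare `H` at `l * t` with the increment of `G` over `[t, l * t]`, then substitute `s = l * t`
  have hpow : Tendsto (fun l : ℝ => l ^ (r + 1)) (𝓝[>] 1) (𝓝 1) := by
    simpa using ((continuous_pow (r + 1)).tendsto (1 : ℝ)).mono_left nhdsWithin_le_nhds
  obtain ⟨l, hbl, hl⟩ := (((hpow.mul hA).eventually (eventually_lt_nhds (by simpa using hb))).and
    self_mem_nhdsWithin).exists
  have hl0 : 0 < l := zero_lt_one.trans hl
  have hl1 : 0 < l - 1 := sub_pos.2 hl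
  have hAb : l ^ (r + 1) * A l < b * (l - 1) :=
    calc l ^ (r + 1) * A l = l ^ (r + 1) * (A l / (l - 1)) * (l - 1) := by field_simp
      _ < b * (l - 1) := mul_lt_mul_of_pos_right hbl hl1
  have hlt : ∀ᶠ t in atTop, (l * t) ^ (r + 1) * H (l * t) < b := by
    filter_upwards [((hGA l hl).const_mul (l ^ (r + 1))).eventually (eventually_lt_nhds hAb),
      eventually_gt_atTop 0] with t hbt ht
    have hGH := (sub_mul_le_sub_and_sub_le_sub_mul hH hG (lt_mul_left ht hl)).1
    have : (l * t) ^ (r + 1) * H (l * t) * (l - 1) < b * (l - 1) :=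
      calc (l * t) ^ (r + 1) * H (l * t) * (l - 1)
          = l ^ (r + 1) * (t ^ r * ((l * t - t) * H (l * t))) := by ring
        _ ≤ l ^ (r + 1) * (t ^ r * (G t - G (l * t))) := by gcongr
        _ < b * (l - 1) := hbt
    exact lt_of_mul_lt_mul_right this hl1.le
  filter_upwards [(tendsto_id.atTop_div_const hl0).eventually hlt] with s hs
  rwa [id, mul_div_cancel₀ s hl0.ne'] at hs

theorem tendsto_pow_succ_mul_of_tendsto_pow_mul_sub (hH : Antitone H)
    (hG : ∀ t, HasDerivAt G (-H t) t)
    (hGA : ∀ l, 1 < l → Tendsto (fun t => t ^ r * (G t - G (l * t))) atTop (𝓝 (A l)))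
    (hA1 : A 1 = 0) (hA : HasDerivWithinAt A L (Ioi 1) 1) :
    Tendsto (fun t => t ^ (r + 1) * H t) atTop (𝓝 L) := by
  have hslope : Tendsto (fun l => A l / (l - 1)) (𝓝[>] 1) (𝓝 L) := by
    refine ((hasDerivWithinAt_iff_tendsto_slope' (lt_irrefl 1)).1 hA).congr fun l => ?_
    rw [slope_def_field, hA1, sub_zero]
  exact tendsto_order.2 ⟨fun b hb => eventually_lt_pow_succ_mul hH hG hGA hslope hb,
    fun b hb => eventually_pow_succ_mul_lt hH hG hGA hslope hb⟩

end MonotoneDensity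

theorem abs_one_sub_exp_le (v : ℝ) : |1 - exp v| ≤ |v| * exp |v| := by
  have hmul : exp (-|v|) * exp |v| = 1 := by rw [← exp_add]; simp
  rw [abs_le]
  constructor
  · have h1 : exp v ≤ exp |v| := exp_le_exp.2 (le_abs_self v)
    nlinarith [add_one_le_exp (-|v|), exp_pos |v|, abs_nonneg v]
  · nlinarith [add_one_le_exp v, neg_le_abs v, one_le_exp (abs_nonneg v), abs_nonneg v]

theorem abs_one_sub_exp_neg_mul_le {y : ℝ} (hy : y ∈ Icc (0 : ℝ) 1) {t M : ℝ} (ht : |t| ≤ M) :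
    |1 - exp (-t * y)| ≤ M * exp M * y := by
  have hty : |-t * y| ≤ M * y := by
    rw [abs_mul, abs_neg, abs_of_nonneg hy.1]; exact mul_le_mul_of_nonneg_right ht hy.1
  have hM : M * y ≤ M := mul_le_of_le_one_right ((abs_nonneg t).trans ht) hy.2
  calc |1 - exp (-t * y)| ≤ |-t * y| * exp |-t * y| := abs_one_sub_exp_le _
    _ ≤ M * y * exp M := mul_le_mul hty (exp_le_exp.2 (hty.trans hM)) (exp_pos _).le
        (mul_nonneg ((abs_nonneg t).trans ht) hy.1)
    _ = M * exp M * y := by ring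

theorem norm_pow_mul_exp_neg_mul_le {y : ℝ} (hy : y ∈ Icc (0 : ℝ) 1) {k : ℕ} (hk : k ≠ 0)
    {t M : ℝ} (ht : |t| ≤ M) : ‖y ^ k * exp (-t * y)‖ ≤ exp M * y := by
  have hexp : exp (-t * y) ≤ exp M := exp_le_exp.2 <| by
    nlinarith [neg_abs_le t, mul_le_of_le_one_right ((abs_nonneg t).trans ht) hy.2, hy.1]
  rw [norm_of_nonneg (by have := hy.1; positivity), mul_comm]
  exact mul_le_mul hexp (pow_le_of_le_one hy.1 hy.2 hk) (by have := hy.1; positivity)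
    (exp_pos M).le

theorem abs_le_abs_add_one_of_mem_ball {t₀ t : ℝ} (ht : t ∈ Metric.ball t₀ 1) :
    |t| ≤ |t₀| + 1 := by
  have := abs_sub_abs_le_abs_sub t t₀
  rw [Metric.mem_ball, dist_eq] at ht
  linarith

section LaplaceMoment

variable {α : Type*} [MeasurableSpace α] {μ : Measure α} {g : α → ℝ}

/-- `t ↦ ∫ gᵏ e^{-t g} dμ`, which is `(-1)ᵏ⁺¹` times the `k`-th derivative of
`t ↦ ∫ (1 - e^{-t g}) dμ`. -/
noncomputable def laplaceMoment (μ : Measure α) (g : α → ℝ) (k : ℕ) (t : ℝ) : ℝ :=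
  ∫ x, g x ^ k * exp (-t * g x) ∂μ

theorem hasDerivAt_pow_mul_exp_neg_mul (k : ℕ) (y t : ℝ) :
    HasDerivAt (fun t => y ^ k * exp (-t * y)) (-(y ^ (k + 1) * exp (-t * y))) t := by
  have := (((hasDerivAt_neg t).mul_const y).exp).const_mul (y ^ k)
  exact this.congr_deriv (by ring)

theorem aestronglyMeasurable_pow_mul_exp_neg_mul (hg : AEStronglyMeasurable g μ) (k : ℕ)
    (t : ℝ) : AEStronglyMeasurable (fun x => g x ^ k * exp (-t * g x)) μ :=
  (hg.pow k).mul (continuous_exp.comp_aestronglyMeasurable (hg.const_mul (-t)))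

theorem hasDerivAt_laplaceMoment (hg : Integrable g μ)
    (hg01 : ∀ᵐ x ∂μ, g x ∈ Icc (0 : ℝ) 1) {k : ℕ} (hk : k ≠ 0) (t₀ : ℝ) :
    HasDerivAt (laplaceMoment μ g k) (-laplaceMoment μ g (k + 1) t₀) t₀ := by
  have hbound : ∀ᵐ x ∂μ, ∀ t ∈ Metric.ball t₀ 1,
      ‖-(g x ^ (k + 1) * exp (-t * g x))‖ ≤ exp (|t₀| + 1) * g x := by
    filter_upwards [hg01] with x hx t ht
    rw [norm_neg]
    exact norm_pow_mul_exp_neg_mul_le hx k.succ_ne_zero (abs_le_abs_add_one_of_mem_ball ht)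
  have hint : Integrable (fun x => g x ^ k * exp (-t₀ * g x)) μ := by
    refine (hg.const_mul (exp |t₀|)).mono' (aestronglyMeasurable_pow_mul_exp_neg_mul
      hg.aestronglyMeasurable k t₀) ?_
    filter_upwards [hg01] with x hx
    exact norm_pow_mul_exp_neg_mul_le hx hk le_rfl
  have := (hasDerivAt_integral_of_dominated_loc_of_deriv_le (Metric.ball_mem_nhds t₀ one_pos)
    (Eventually.of_forall (aestronglyMeasurable_pow_mul_exp_neg_mul hg.aestronglyMeasurable k))
    hint (aestronglyMeasurable_pow_mul_exp_neg_mul hg.aestronglyMeasurable (k + 1) t₀).neg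
    hbound (hg.const_mul _)
    (Eventually.of_forall fun x t _ => hasDerivAt_pow_mul_exp_neg_mul k (g x) t)).2
  rwa [integral_neg] at this

theorem hasDerivAt_integral_one_sub_exp_neg_mul (hg : Integrable g μ)
    (hg01 : ∀ᵐ x ∂μ, g x ∈ Icc (0 : ℝ) 1) (t₀ : ℝ) :
    HasDerivAt (fun t => ∫ x, (1 - exp (-t * g x)) ∂μ) (laplaceMoment μ g 1 t₀) t₀ := by
  have hmeas : ∀ t, AEStronglyMeasurable (fun x => 1 - exp (-t * g x)) μ := fun t =>
    aestronglyMeasurable_const.sub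
      (continuous_exp.comp_aestronglyMeasurable (hg.aestronglyMeasurable.const_mul (-t)))
  have hint : Integrable (fun x => 1 - exp (-t₀ * g x)) μ := by
    refine (hg.const_mul (|t₀| * exp |t₀|)).mono' (hmeas t₀) ?_
    filter_upwards [hg01] with x hx
    exact abs_one_sub_exp_neg_mul_le hx le_rfl
  have hbound : ∀ᵐ x ∂μ, ∀ t ∈ Metric.ball t₀ 1,
      ‖g x ^ 1 * exp (-t * g x)‖ ≤ exp (|t₀| + 1) * g x := by
    filter_upwards [hg01] with x hx t ht
    exact norm_pow_mul_exp_neg_mul_le hx one_ne_zero (abs_le_abs_add_one_of_mem_ball ht)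
  have hderiv : ∀ x t, HasDerivAt (fun t => 1 - exp (-t * g x)) (g x ^ 1 * exp (-t * g x)) t :=
    fun x t => by simpa using (hasDerivAt_pow_mul_exp_neg_mul 0 (g x) t).const_sub 1
  exact (hasDerivAt_integral_of_dominated_loc_of_deriv_le (Metric.ball_mem_nhds t₀ one_pos)
    (Eventually.of_forall hmeas) hint
    (aestronglyMeasurable_pow_mul_exp_neg_mul hg.aestronglyMeasurable 1 t₀)
    hbound (hg.const_mul _) (Eventually.of_forall fun x t _ => hderiv x t)).2

theorem laplaceMoment_nonneg (hg01 : ∀ᵐ x ∂μ, g x ∈ Icc (0 : ℝ) 1) (k : ℕ) (t : ℝ) :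
    0 ≤ laplaceMoment μ g k t :=
  integral_nonneg_of_ae <| by
    filter_upwards [hg01] with x hx
    exact mul_nonneg (pow_nonneg hx.1 k) (exp_pos _).le

end LaplaceMoment

theorem tendsto_pow_mul_sub_comp_const_mul {f : ℝ → ℝ} {n : ℕ} {L : ℝ}
    (hf : Tendsto (fun t => t ^ n * f t) atTop (𝓝 L)) {l : ℝ} (hl : 0 < l) :
    Tendsto (fun t => t ^ n * (f t - f (l * t))) atTop (𝓝 (L * (1 - l⁻¹ ^ n))) := by
  have hfl := (hf.comp (tendsto_id.const_mul_atTop hl)).const_mul (l⁻¹ ^ n)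
  rw [show L * (1 - l⁻¹ ^ n) = L - l⁻¹ ^ n * L by ring]
  refine (hf.sub hfl).congr fun t => ?_
  simp only [Function.comp_apply, id, mul_pow, inv_pow]
  field_simp

theorem iteratedDeriv_succ_eq_neg_one_pow_mul {Φ : ℝ → ℝ} {F : ℕ → ℝ → ℝ}
    (hΦ : ∀ t, HasDerivAt Φ (F 0 t) t) (hF : ∀ k t, HasDerivAt (F k) (-F (k + 1) t) t) (k : ℕ) :
    iteratedDeriv (k + 1) Φ = fun t => (-1) ^ k * F k t := by
  induction k with
  | zero => funext t; simp [(hΦ t).deriv]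
  | succ k ih =>
    funext t
    rw [iteratedDeriv_succ, ih, ((hF k t).const_mul _).deriv, pow_succ]
    ring

theorem tendsto_pow_succ_mul_of_tendsto_sub_mul_log {Φ : ℝ → ℝ} {F : ℕ → ℝ → ℝ} {c : ℝ}
    (hΦ : ∀ t, HasDerivAt Φ (F 0 t) t) (hF : ∀ k t, HasDerivAt (F k) (-F (k + 1) t) t)
    (hF_nonneg : ∀ k t, 0 ≤ F (k + 1) t)
    (hdeHaan : ∀ l, 1 < l → Tendsto (fun t => Φ (l * t) - Φ t) atTop (𝓝 (c * log l))) (k : ℕ) :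
    Tendsto (fun t => t ^ (k + 1) * F k t) atTop (𝓝 (c * k.factorial)) := by
  have hanti : ∀ k, Antitone (F k) := fun k =>
    antitone_of_deriv_nonpos (fun t => (hF k t).differentiableAt)
      fun t => (hF k t).deriv ▸ neg_nonpos.2 (hF_nonneg k t)
  induction k with
  | zero =>
    have hlog : HasDerivWithinAt (fun l => c * log l) c (Ioi 1) 1 := by
      simpa using ((hasDerivAt_log one_ne_zero).const_mul c).hasDerivWithinAt
    simpa using tendsto_pow_succ_mul_of_tendsto_pow_mul_sub (r := 0) (hanti 0)
      (fun t => (hΦ t).neg) (fun l hl => (hdeHaan l hl).congr fun t => by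
        simp only [pow_zero, one_mul, Pi.neg_apply]; ring) (by simp) hlog
  | succ k ih =>
    have hA : HasDerivWithinAt (fun l : ℝ => c * k.factorial * (1 - l⁻¹ ^ (k + 1)))
        (c * (k + 1).factorial) (Ioi 1) 1 := by
      have := (((hasDerivAt_inv one_ne_zero).pow (k + 1)).const_sub 1).const_mul
        (c * k.factorial)
      refine this.hasDerivWithinAt.congr_deriv ?_
      simp [Nat.factorial_succ]
      ring
    exact tendsto_pow_succ_mul_of_tendsto_pow_mul_sub (hanti (k + 1)) (hF k)
      (fun l hl => tendsto_pow_mul_sub_comp_const_mul ih (by linarith)) (by simp) hA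

theorem one_sub_exp_neg_mem_Icc {x : ℝ} (hx : 0 ≤ x) : 1 - exp (-x) ∈ Icc (0 : ℝ) 1 :=
  ⟨sub_nonneg.2 (exp_le_one_iff.2 (neg_nonpos.2 hx)), sub_le_self _ (exp_pos _).le⟩

theorem one_sub_exp_neg_le_min (x : ℝ) : 1 - exp (-x) ≤ min x 1 :=
  le_min (by linarith [add_one_le_exp (-x)]) (sub_le_self _ (exp_pos _).le)

theorem integrable_one_sub_exp_neg {ν : Measure ℝ}
    (hint : ∫⁻ x in Ioi (0 : ℝ), ENNReal.ofReal (min x 1) ∂ν < ⊤) :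
    Integrable (fun x => 1 - exp (-x)) (ν.restrict (Ioi 0)) := by
  have hnonneg : ∀ᵐ x ∂ν.restrict (Ioi 0), 0 ≤ 1 - exp (-x) :=
    (ae_restrict_iff' measurableSet_Ioi).2 <| .of_forall fun x hx =>
      (one_sub_exp_neg_mem_Icc (le_of_lt hx)).1
  refine ⟨by fun_prop, (hasFiniteIntegral_iff_ofReal hnonneg).2 (lt_of_le_of_lt ?_ hint)⟩
  exact lintegral_mono fun x => ENNReal.ofReal_le_ofReal (one_sub_exp_neg_le_min x)

theorem levy_exponent_deHaan_implies_deriv_general (ν : Measure ℝ)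
    (hint : ∫⁻ x in Set.Ioi (0 : ℝ), ENNReal.ofReal (min x 1) ∂ν < ⊤)
    (Φ : ℝ → ℝ)
    (hΦ : ∀ t : ℝ, Φ t =
      ∫ x in Set.Ioi (0 : ℝ), (1 - Real.exp (-t * (1 - Real.exp (-x)))) ∂ν)
    (c : ℝ)
    (hdeHaan : ∀ l : ℝ, 0 < l →
      Tendsto (fun t : ℝ => Φ (l * t) - Φ t) atTop (nhds (c * Real.log l)))
    (r : ℕ) (hr : 1 ≤ r) :
    Tendsto (fun t : ℝ => (-1 : ℝ) ^ (r + 1) * t ^ r * iteratedDeriv r Φ t)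
      atTop (nhds (c * (Nat.factorial (r - 1) : ℝ))) := by
  obtain ⟨k, rfl⟩ := Nat.exists_eq_add_of_le' hr
  obtain rfl : Φ = _ := funext hΦ
  set μ := ν.restrict (Ioi 0)
  set F : ℕ → ℝ → ℝ := fun k => laplaceMoment μ (fun x => 1 - exp (-x)) (k + 1)
  have hg := integrable_one_sub_exp_neg hint
  have hg01 : ∀ᵐ x ∂μ, 1 - exp (-x) ∈ Icc (0 : ℝ) 1 :=
    (ae_restrict_iff' measurableSet_Ioi).2 <| .of_forall fun x hx =>
      one_sub_exp_neg_mem_Icc (le_of_lt hx)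
  have hΦ' : ∀ t, HasDerivAt _ (F 0 t) t := hasDerivAt_integral_one_sub_exp_neg_mul hg hg01
  have hF : ∀ k t, HasDerivAt (F k) (-F (k + 1) t) t := fun k =>
    hasDerivAt_laplaceMoment hg hg01 k.succ_ne_zero
  have hlim := tendsto_pow_succ_mul_of_tendsto_sub_mul_log hΦ' hF
    (fun k => laplaceMoment_nonneg hg01 (k + 2)) (fun l hl => hdeHaan l (by linarith)) k
  have hsign : (-1 : ℝ) ^ (k + 1 + 1) * (-1) ^ k = 1 := by
    rw [← pow_add]; exact Even.neg_one_pow ⟨k + 1, by ring⟩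
  rw [Nat.add_sub_cancel, iteratedDeriv_succ_eq_neg_one_pow_mul hΦ' hF]
  exact hlim.congr fun t => by linear_combination (-(t ^ (k + 1) * F k t)) * hsign

/-- Lemma 4.1, direct part. Let `ν` be a nonzero σ-finite Borel measure on `(0,∞)` with
`∫ min(x,1) ν(dx) < ∞`, and let `Φ(t) = ∫_{(0,∞)} (1 - exp(-t(1-e^{-x}))) ν(dx)`. If
`Φ(λt) - Φ(t) → c log λ` as `t → ∞` for every `λ > 0` (with `c > 0`), then for every integer
`r ≥ 1`, `(-1)^{r+1} t^r Φ^{(r)}(t) → c (r-1)!` as `t → ∞`. -/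
theorem levy_exponent_deHaan_implies_deriv (ν : Measure ℝ) [SigmaFinite ν]
    (hsupp : ν (Set.Iic 0) = 0) (hnz : ν ≠ 0)
    (hint : ∫⁻ x in Set.Ioi (0 : ℝ), ENNReal.ofReal (min x 1) ∂ν < ⊤)
    (Φ : ℝ → ℝ)
    (hΦ : ∀ t : ℝ, Φ t =
      ∫ x in Set.Ioi (0 : ℝ), (1 - Real.exp (-t * (1 - Real.exp (-x)))) ∂ν)
    (c : ℝ) (hc : 0 < c)
    (hdeHaan : ∀ l : ℝ, 0 < l →
      Tendsto (fun t : ℝ => Φ (l * t) - Φ t) atTop (nhds (c * Real.log l)))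
    (r : ℕ) (hr : 1 ≤ r) :
    Tendsto (fun t : ℝ => (-1 : ℝ) ^ (r + 1) * t ^ r * iteratedDeriv r Φ t)
      atTop (nhds (c * (Nat.factorial (r - 1) : ℝ))) :=
  levy_exponent_deHaan_implies_deriv_general ν hint Φ hΦ c hdeHaan r hr
end

section
/- Derivative identity for the critical Φ: let Φ(t) = ∫_0^t (1 − e^{−y})/y dy and, for an integer r ≥ 1, let F_r(t) = 1 − e^{−t} ∑_{k=0}^{r−1} t^k/k!. Then for every integer r ≥ 1 and every t > 0, (−1)^{r+1} t^r Φ^{(r)}(t) = (r−1)! · F_r(t), where Φ^{(r)} denotes the r-th derivative of Φ. Consequently, for each r ≥ 1 the function t ↦ (−1)^{r+1} t^r Φ^{(r)}(t) is nondecreasing on (0,∞). -/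
/-!
Write `F_r(t) = 1 - e^{-t} ∑_{k<r} t^k/k!`. Since `Φ'(t) = (1 - e^{-t})/t = F_1(t)/t`, it
suffices to see that `G_r(t) = (-1)^{r+1} (r-1)! F_r(t) / t^r` satisfies `G_r' = G_{r+1}`.
This follows from the quotient rule together with `F_r' = e^{-t} t^{r-1}/(r-1)!` and
`F_{r+1} = F_r - e^{-t} t^r/r!`. Monotonicity is then that of `F_r`, whose derivative is
nonnegative on `[0, ∞)`.
-/

open MeasureTheory Real

noncomputable section

/-- The paper's `F_r`, the distribution function of `Gamma(r, 1)`. -/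
def erlangCdf (r : ℕ) (t : ℝ) : ℝ :=
  1 - exp (-t) * ∑ k ∈ Finset.range r, t ^ k / (k.factorial : ℝ)

def criticalPhi (s : ℝ) : ℝ :=
  ∫ y in (0 : ℝ)..s, (1 - exp (-y)) / y

lemma hasDerivAt_sum_range_succ_pow_div_factorial (m : ℕ) (t : ℝ) :
    HasDerivAt (fun t : ℝ => ∑ k ∈ Finset.range (m + 1), t ^ k / (k.factorial : ℝ))
      (∑ k ∈ Finset.range m, t ^ k / (k.factorial : ℝ)) t := by
  refine (HasDerivAt.fun_sum fun k _ => (hasDerivAt_pow k t).div_const (k.factorial : ℝ))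
    |>.congr_deriv ?_
  rw [Finset.sum_range_succ']
  simp only [Nat.cast_zero, zero_mul, zero_div, add_zero, Nat.add_sub_cancel]
  refine Finset.sum_congr rfl fun k _ => ?_
  rw [Nat.factorial_succ, Nat.cast_mul]
  field_simp

lemma hasDerivAt_erlangCdf_succ (m : ℕ) (t : ℝ) :
    HasDerivAt (erlangCdf (m + 1)) (exp (-t) * t ^ m / (m.factorial : ℝ)) t := by
  refine ((hasDerivAt_const t 1).sub
    ((hasDerivAt_neg t).exp.mul (hasDerivAt_sum_range_succ_pow_div_factorial m t)))
    |>.congr_deriv ?_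
  rw [Finset.sum_range_succ]
  field_simp
  ring

lemma monotoneOn_erlangCdf (r : ℕ) : MonotoneOn (erlangCdf r) (Set.Ici 0) := by
  obtain _ | m := r
  · intro a _ b _ _
    simp [erlangCdf]
  refine monotoneOn_of_hasDerivWithinAt_nonneg (convex_Ici 0)
    (fun t _ => (hasDerivAt_erlangCdf_succ m t).continuousAt.continuousWithinAt)
    (fun t _ => (hasDerivAt_erlangCdf_succ m t).hasDerivWithinAt) fun t ht => ?_
  rw [interior_Ici] at ht
  have : 0 ≤ t := le_of_lt ht
  positivity

lemma norm_one_sub_exp_neg_div_le_one {y : ℝ} (hy : 0 ≤ y) :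
    ‖(1 - exp (-y)) / y‖ ≤ 1 := by
  rcases hy.eq_or_lt with rfl | hy
  · simp
  have h_nonneg : 0 ≤ 1 - exp (-y) := by
    linarith [exp_le_one_iff.2 (neg_nonpos.2 hy.le)]
  rw [norm_div, norm_of_nonneg h_nonneg, norm_of_nonneg hy.le, div_le_one hy]
  linarith [add_one_le_exp (-y)]

lemma hasDerivAt_criticalPhi {t : ℝ} (ht : 0 < t) :
    HasDerivAt criticalPhi ((1 - exp (-t)) / t) t := by
  have h_meas : Measurable fun y : ℝ => (1 - exp (-y)) / y := by fun_prop
  have h_int : IntervalIntegrable (fun y : ℝ => (1 - exp (-y)) / y) volume 0 t := by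
    rw [intervalIntegrable_iff, Set.uIoc_of_le ht.le]
    refine Measure.integrableOn_of_bounded (M := 1) measure_Ioc_lt_top.ne
      h_meas.aestronglyMeasurable ?_
    filter_upwards [ae_restrict_mem measurableSet_Ioc] with y hy
    exact norm_one_sub_exp_neg_div_le_one hy.1.le
  have h_cont : ContinuousAt (fun y : ℝ => (1 - exp (-y)) / y) t := by
    fun_prop (disch := positivity)
  exact intervalIntegral.integral_hasDerivAt_right h_int
    h_meas.stronglyMeasurable.stronglyMeasurableAtFilter h_cont

def criticalPhiDeriv (r : ℕ) (t : ℝ) : ℝ :=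
  (-1) ^ (r + 1) * ((r - 1).factorial : ℝ) * erlangCdf r t / t ^ r

lemma hasDerivAt_criticalPhiDeriv_succ (m : ℕ) {t : ℝ} (ht : 0 < t) :
    HasDerivAt (criticalPhiDeriv (m + 1)) (criticalPhiDeriv (m + 2) t) t := by
  refine (((hasDerivAt_erlangCdf_succ m t).const_mul ((-1) ^ (m + 2) * (m.factorial : ℝ))).div
    (hasDerivAt_pow (m + 1) t) (pow_ne_zero _ ht.ne')).congr_deriv ?_
  have h_step : erlangCdf (m + 2) t
      = erlangCdf (m + 1) t - exp (-t) * t ^ (m + 1) / ((m + 1).factorial : ℝ) := by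
    simp only [erlangCdf, Finset.sum_range_succ _ (m + 1)]
    ring
  simp only [criticalPhiDeriv, h_step, show m + 2 - 1 = m + 1 from rfl, Nat.add_sub_cancel,
    Nat.factorial_succ, Nat.cast_mul]
  field_simp
  ring

lemma iteratedDeriv_criticalPhi (m : ℕ) {t : ℝ} (ht : 0 < t) :
    iteratedDeriv (m + 1) criticalPhi t = criticalPhiDeriv (m + 1) t := by
  induction m generalizing t with
  | zero =>
    rw [iteratedDeriv_one, (hasDerivAt_criticalPhi ht).deriv]
    simp [criticalPhiDeriv, erlangCdf]
  | succ m ih =>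
    have h_eventually : iteratedDeriv (m + 1) criticalPhi =ᶠ[nhds t] criticalPhiDeriv (m + 1) :=
      Filter.eventually_of_mem (Ioi_mem_nhds ht) fun s hs => ih hs
    rw [iteratedDeriv_succ, h_eventually.deriv_eq, (hasDerivAt_criticalPhiDeriv_succ m ht).deriv]

lemma neg_one_pow_mul_pow_mul_iteratedDeriv_criticalPhi {r : ℕ} (hr : 1 ≤ r) {t : ℝ}
    (ht : 0 < t) :
    (-1) ^ (r + 1) * t ^ r * iteratedDeriv r criticalPhi t
      = ((r - 1).factorial : ℝ) * erlangCdf r t := by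
  obtain ⟨m, rfl⟩ : ∃ m, r = m + 1 := ⟨r - 1, (Nat.sub_add_cancel hr).symm⟩
  rw [iteratedDeriv_criticalPhi m ht, criticalPhiDeriv]
  field_simp
  rw [← pow_mul, pow_mul', neg_one_sq, one_pow, one_mul]

end

/-- Derivative identity for the critical `Φ(t) = ∫_0^t (1-e^{-y})/y dy`: for every integer
`r ≥ 1` and every `t > 0`, `(-1)^{r+1} t^r Φ^{(r)}(t) = (r-1)! F_r(t)`, where
`F_r(t) = 1 - e^{-t} ∑_{k=0}^{r-1} t^k/k!` is the `Gamma(r,1)` cdf. Consequently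
`t ↦ (-1)^{r+1} t^r Φ^{(r)}(t)` is nondecreasing on `(0,∞)`. -/
theorem critical_levy_Phi_iteratedDeriv (r : ℕ) (hr : 1 ≤ r) :
    (∀ t : ℝ, 0 < t →
      (-1 : ℝ) ^ (r + 1) * t ^ r
          * iteratedDeriv r (fun s : ℝ => ∫ y in (0 : ℝ)..s, (1 - Real.exp (-y)) / y) t
        = (Nat.factorial (r - 1) : ℝ)
          * (1 - Real.exp (-t) * ∑ k ∈ Finset.range r, t ^ k / (Nat.factorial k : ℝ))) ∧
    MonotoneOn
      (fun t : ℝ => (-1 : ℝ) ^ (r + 1) * t ^ r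
        * iteratedDeriv r (fun s : ℝ => ∫ y in (0 : ℝ)..s, (1 - Real.exp (-y)) / y) t)
      (Set.Ioi (0 : ℝ)) := by
  have h_identity := fun t (ht : 0 < t) => neg_one_pow_mul_pow_mul_iteratedDeriv_criticalPhi hr ht
  change (∀ t, _) ∧ MonotoneOn (fun t => _ * iteratedDeriv r criticalPhi t) _
  refine ⟨h_identity, fun a ha b hb hab => ?_⟩
  dsimp only
  rw [h_identity a ha, h_identity b hb]
  exact mul_le_mul_of_nonneg_left (monotoneOn_erlangCdf r (Set.Ioi_subset_Ici_self ha)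
    (Set.Ioi_subset_Ici_self hb) hab) (Nat.cast_nonneg _)
end

section
/- Transition probabilities of the leaf-count chain (computation in the proof of Proposition 2.1): for all integers 1 ≤ k ≤ m, binom(m,k) · ∫_{(0,∞)} (1 − e^{−x})^k e^{−x(m−k)} · (e^{−x}/(1 − e^{−x})) dx = binom(m,k) · ∫_0^1 x^{k−1}(1 − x)^{m−k} dx = 1/k. Consequently, ∑_{k=1}^m binom(m,k) ∫_{(0,∞)} (1 − e^{−x})^k e^{−x(m−k)} (e^{−x}/(1 − e^{−x})) dx = h_m, and the ratio [binom(m,k) ∫_{(0,∞)} (1 − e^{−x})^k e^{−x(m−k)} ν(dx)] / [∑_{l=1}^m binom(m,l) ∫_{(0,∞)} (1 − e^{−x})^l e^{−x(m−l)} ν(dx)] equals 1/(k h_m). -/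
open MeasureTheory

/-- The `m`-th harmonic number `h_m = ∑_{j=1}^m 1/j`. -/
noncomputable def harmonicNumber (m : ℕ) : ℝ := ∑ j ∈ Finset.Icc 1 m, (1 : ℝ) / j

/-!
The substitution `u = 1 - e^{-x}` maps `(0, ∞)` onto `(0, 1)` with `du = e^{-x} dx`, and turns
`(1 - e^{-x})^k e^{-x(m-k)} ν(dx)` into `u^{k-1} (1 - u)^{m-k} du`. This Beta integral equals
`(k-1)! (m-k)! / m!`, so multiplied by `C(m,k)` it is `1/k`; summing over `k` gives `h_m`.
-/

open Real Set Nat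

theorem integral_pow_mul_one_sub_pow (a b : ℕ) :
    ∫ x in (0 : ℝ)..1, x ^ a * (1 - x) ^ b = (a ! * b ! / (a + b + 1)! : ℝ) := by
  have hbeta := Complex.betaIntegral_eq_Gamma_mul_div (a + 1) (b + 1)
    (by simp only [Complex.add_re, Complex.natCast_re, Complex.one_re]; positivity)
    (by simp only [Complex.add_re, Complex.natCast_re, Complex.one_re]; positivity)
  rw [show (a + 1 + (b + 1) : ℂ) = ((a + b + 1 : ℕ) : ℂ) + 1 by push_cast; ring,
    Complex.Gamma_nat_eq_factorial, Complex.Gamma_nat_eq_factorial,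
    Complex.Gamma_nat_eq_factorial, Complex.betaIntegral] at hbeta
  apply Complex.ofReal_injective
  push_cast
  rw [← hbeta, ← intervalIntegral.integral_ofReal]
  refine intervalIntegral.integral_congr fun x _ => ?_
  simp only [add_sub_cancel_right]
  norm_cast

theorem choose_mul_integral_pow_mul_one_sub_pow {m k : ℕ} (hk : 1 ≤ k) (hkm : k ≤ m) :
    (m.choose k : ℝ) * ∫ x in (0 : ℝ)..1, x ^ (k - 1) * (1 - x) ^ (m - k) = 1 / k := by
  obtain ⟨j, rfl⟩ := Nat.exists_eq_add_of_le' hk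
  rw [integral_pow_mul_one_sub_pow, Nat.cast_choose ℝ hkm, Nat.add_sub_cancel,
    show j + (m - (j + 1)) + 1 = m by omega, Nat.factorial_succ]
  field_simp
  push_cast
  ring

theorem image_one_sub_exp_neg_Ioi : (fun x => 1 - exp (-x)) '' Ioi 0 = Ioo 0 1 := by
  ext u
  constructor
  · rintro ⟨x, hx, rfl⟩
    have : exp (-x) < 1 := exp_lt_one_iff.2 (neg_lt_zero.2 hx)
    exact ⟨by linarith, by linarith [exp_pos (-x)]⟩
  · rintro ⟨hu0, hu1⟩
    refine ⟨-log (1 - u), neg_pos.2 (log_neg (by linarith) (by linarith)), ?_⟩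
    simp [exp_log (sub_pos.2 hu1)]

theorem integral_Ioi_exp_neg_smul_comp_one_sub_exp_neg {E : Type*} [NormedAddCommGroup E]
    [NormedSpace ℝ E] (g : ℝ → E) :
    ∫ x in Ioi 0, exp (-x) • g (1 - exp (-x)) = ∫ u in (0 : ℝ)..1, g u := by
  have hderiv : ∀ x ∈ Ioi (0 : ℝ),
      HasDerivWithinAt (fun x => 1 - exp (-x)) (exp (-x)) (Ioi 0) x := fun x _ => by
    simpa using ((hasDerivAt_neg x).exp.const_sub 1).hasDerivWithinAt
  have hinj : InjOn (fun x => 1 - exp (-x)) (Ioi (0 : ℝ)) := fun x _ y _ h => by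
    simpa using exp_injective (sub_right_injective h)
  rw [intervalIntegral.integral_of_le zero_le_one, integral_Ioc_eq_integral_Ioo,
    ← image_one_sub_exp_neg_Ioi,
    integral_image_eq_integral_abs_deriv_smul measurableSet_Ioi hderiv hinj]
  simp only [abs_of_pos (exp_pos _)]

/-- `C(m,k) ∫ (1 - e^{-x})^k e^{-x(m-k)} ν(dx)`; the last factor of the integrand is the density
of the critical Lévy measure `ν`. -/
noncomputable def leafCountRate (m k : ℕ) : ℝ :=
  m.choose k * ∫ x in Ioi (0 : ℝ), (1 - exp (-x)) ^ k * exp (-x * ((m : ℝ) - k))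
    * (exp (-x) / (1 - exp (-x)))

theorem leafCountRate_eq_choose_mul_integral {m k : ℕ} (hk : 1 ≤ k) (hkm : k ≤ m) :
    leafCountRate m k = m.choose k * ∫ x in (0 : ℝ)..1, x ^ (k - 1) * (1 - x) ^ (m - k) := by
  rw [leafCountRate, ← integral_Ioi_exp_neg_smul_comp_one_sub_exp_neg]
  congr 1
  refine setIntegral_congr_fun measurableSet_Ioi fun x hx => ?_
  obtain ⟨j, rfl⟩ := Nat.exists_eq_add_of_le' hk
  obtain ⟨n, rfl⟩ := Nat.exists_eq_add_of_le hkm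
  have hne : 1 - exp (-x) ≠ 0 := (sub_pos.2 (exp_lt_one_iff.2 (neg_lt_zero.2 hx))).ne'
  rw [show -x * ((j + 1 + n : ℕ) - (j + 1 : ℕ) : ℝ) = n * -x by push_cast; ring, exp_nat_mul,
    Nat.add_sub_cancel, Nat.add_sub_cancel_left, sub_sub_cancel, smul_eq_mul]
  field_simp
  ring

theorem leafCountRate_eq_inv {m k : ℕ} (hk : 1 ≤ k) (hkm : k ≤ m) :
    leafCountRate m k = 1 / k := by
  rw [leafCountRate_eq_choose_mul_integral hk hkm, choose_mul_integral_pow_mul_one_sub_pow hk hkm]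

theorem sum_leafCountRate (m : ℕ) :
    ∑ l ∈ Finset.Icc 1 m, leafCountRate m l = harmonicNumber m :=
  Finset.sum_congr rfl fun _ hl =>
    leafCountRate_eq_inv (Finset.mem_Icc.1 hl).1 (Finset.mem_Icc.1 hl).2

/-- Transition probabilities of the leaf-count chain (proof of Proposition 2.1), for the
critical Lévy measure `ν(dx) = e^{-x}/(1-e^{-x}) dx`: for `1 ≤ k ≤ m`,
`C(m,k) ∫_{(0,∞)} (1-e^{-x})^k e^{-x(m-k)} ν(dx) = C(m,k) ∫_0^1 x^{k-1}(1-x)^{m-k} dx = 1/k`;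
consequently the total rate is `h_m` and the jump probabilities are `1/(k h_m)`. -/
theorem leaf_count_chain_transition_probabilities (m k : ℕ) (hk : 1 ≤ k) (hkm : k ≤ m) :
    ((m.choose k : ℝ) * ∫ x in Set.Ioi (0 : ℝ),
        (1 - Real.exp (-x)) ^ k * Real.exp (-x * ((m : ℝ) - k))
          * (Real.exp (-x) / (1 - Real.exp (-x)))
      = (m.choose k : ℝ) * ∫ x in (0 : ℝ)..1, x ^ (k - 1) * (1 - x) ^ (m - k)) ∧
    ((m.choose k : ℝ) * ∫ x in Set.Ioi (0 : ℝ),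
        (1 - Real.exp (-x)) ^ k * Real.exp (-x * ((m : ℝ) - k))
          * (Real.exp (-x) / (1 - Real.exp (-x)))
      = 1 / k) ∧
    (∑ l ∈ Finset.Icc 1 m, (m.choose l : ℝ) * ∫ x in Set.Ioi (0 : ℝ),
        (1 - Real.exp (-x)) ^ l * Real.exp (-x * ((m : ℝ) - l))
          * (Real.exp (-x) / (1 - Real.exp (-x)))
      = harmonicNumber m) ∧
    (((m.choose k : ℝ) * ∫ x in Set.Ioi (0 : ℝ),
        (1 - Real.exp (-x)) ^ k * Real.exp (-x * ((m : ℝ) - k))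
          * (Real.exp (-x) / (1 - Real.exp (-x))))
      / (∑ l ∈ Finset.Icc 1 m, (m.choose l : ℝ) * ∫ x in Set.Ioi (0 : ℝ),
          (1 - Real.exp (-x)) ^ l * Real.exp (-x * ((m : ℝ) - l))
            * (Real.exp (-x) / (1 - Real.exp (-x))))
      = 1 / (k * harmonicNumber m)) := by
  refine ⟨leafCountRate_eq_choose_mul_integral hk hkm, leafCountRate_eq_inv hk hkm,
    sum_leafCountRate m, ?_⟩
  change leafCountRate m k / ∑ l ∈ Finset.Icc 1 m, leafCountRate m l = _
  rw [leafCountRate_eq_inv hk hkm, sum_leafCountRate, div_div]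
end

section
/- Logarithmic integral asymptotics of the centering (used to pass from Theorem 2.2 to Theorem 1.2): with Φ(t) = ∫_0^t (1 − e^{−y})/y dy, the quantity ∫_1^n y^{-1} Φ(y) dy − (log n)²/2 − γ·log n converges to a finite limit as n → ∞, where γ is the Euler–Mascheroni constant; in particular ∫_1^n y^{-1} Φ(y) dy = (log n)²/2 + γ log n + o(log n) as n → ∞. -/
/-!
Integrating `e^{-t} log t` over `(0, Y)` by parts against `(1 - e^{-t}) log t - Ein t` and
comparing with `∫_0^∞ e^{-t} log t = Γ'(1) = -γ` shows `Ein Y - log Y → γ`. Since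
`Ein y - log y` has derivative `-e^{-y}/y`, this gives `Ein y = log y + γ + E₁ y` with
`0 ≤ E₁ y ≤ e^{-y}/y`. Dividing by `y` and integrating over `[1, n]`, the first two terms
contribute exactly `(log n)²/2 + γ log n`, and the remainder `∫_1^n E₁ y / y` converges.
-/

open Filter MeasureTheory Set Real

local notation "γ" => eulerMascheroniConstant

theorem continuous_dslope {𝕜 E : Type*} [NontriviallyNormedField 𝕜] [NormedAddCommGroup E]
    [NormedSpace 𝕜 E] {f : 𝕜 → E} (hf : Differentiable 𝕜 f) (a : 𝕜) :
    Continuous (dslope f a) := by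
  refine continuous_iff_continuousAt.2 fun b => ?_
  rcases eq_or_ne b a with rfl | hb
  · exact continuousAt_dslope_same.2 (hf b)
  · exact (continuousAt_dslope_of_ne hb).2 (hf b).continuousAt

theorem abs_log_le_two_mul_rpow {t : ℝ} (ht : 0 < t) :
    |log t| ≤ 2 * t ^ (1 / 2 : ℝ) + 2 * t ^ (-(1 / 2) : ℝ) := by
  have hlog := log_le_rpow_div ht.le (ε := 1 / 2) (by norm_num)
  have hlog_inv := log_le_rpow_div (inv_nonneg.2 ht.le) (ε := 1 / 2) (by norm_num)
  rw [log_inv, inv_rpow ht.le, ← rpow_neg ht.le] at hlog_inv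
  have := rpow_pos_of_pos ht (1 / 2 : ℝ)
  have := rpow_pos_of_pos ht (-(1 / 2) : ℝ)
  rw [abs_le]
  constructor <;> linarith

theorem integrableOn_exp_neg_mul_log_Ioi_zero :
    IntegrableOn (fun t => exp (-t) * log t) (Ioi 0) := by
  have hdom : IntegrableOn
      (fun t => 2 * (exp (-t) * t ^ ((3 / 2 : ℝ) - 1)) + 2 * (exp (-t) * t ^ ((1 / 2 : ℝ) - 1)))
      (Ioi 0) :=
    ((GammaIntegral_convergent (by norm_num)).const_mul 2).add
      ((GammaIntegral_convergent (by norm_num)).const_mul 2)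
  have hcont : ContinuousOn (fun t => exp (-t) * log t) (Ioi 0) :=
    (continuous_exp.comp continuous_neg).continuousOn.mul
      (continuousOn_log.mono fun t ht => ne_of_gt ht)
  refine hdom.mono' (hcont.aestronglyMeasurable measurableSet_Ioi) ?_
  filter_upwards [ae_restrict_mem measurableSet_Ioi] with t ht
  rw [norm_mul, norm_of_nonneg (exp_pos _).le, norm_eq_abs]
  calc exp (-t) * |log t| ≤ exp (-t) * (2 * t ^ (1 / 2 : ℝ) + 2 * t ^ (-(1 / 2) : ℝ)) :=
        mul_le_mul_of_nonneg_left (abs_log_le_two_mul_rpow ht) (exp_pos _).le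
    _ = _ := by norm_num; ring

theorem integral_exp_neg_mul_log_Ioi_zero :
    ∫ t in Ioi (0 : ℝ), exp (-t) * log t = -γ := by
  have hGamma : HasDerivAt Complex.Gamma
      (∫ t in Ioi (0 : ℝ), ((exp (-t) * log t : ℝ) : ℂ)) 1 := by
    have h := Complex.hasDerivAt_GammaIntegral (s := 1) (by norm_num)
    simp only [sub_self, Complex.cpow_zero, one_mul] at h
    refine (h.congr_deriv ?_).congr_of_eventuallyEq ?_
    · push_cast; simp_rw [mul_comm]
    · filter_upwards [(isOpen_lt continuous_const Complex.continuous_re).mem_nhds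
        (show (0 : ℝ) < (1 : ℂ).re by norm_num)] with s hs
      exact Complex.Gamma_eq_integral hs
  rw [integral_complex_ofReal] at hGamma
  exact_mod_cast hGamma.unique Complex.hasDerivAt_Gamma_one

-- The entire exponential integral `Ein` and the exponential integral `E₁` (DLMF 6.2.3, 6.2.1).
noncomputable def Ein (t : ℝ) : ℝ := ∫ u in (0 : ℝ)..t, (1 - exp (-u)) / u

noncomputable def E₁ (y : ℝ) : ℝ := ∫ t in Ioi y, exp (-t) / t

theorem dslope_neg_exp_neg_of_ne {u : ℝ} (hu : u ≠ 0) :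
    dslope (fun u => -exp (-u)) 0 u = (1 - exp (-u)) / u := by
  rw [dslope_of_ne _ hu, slope_def_field]
  simp only [neg_zero, exp_zero, sub_zero]
  ring

theorem Ein_eq_integral_dslope (t : ℝ) :
    Ein t = ∫ u in (0 : ℝ)..t, dslope (fun u => -exp (-u)) 0 u := by
  refine intervalIntegral.integral_congr_ae ?_
  filter_upwards [Measure.ae_ne volume 0] with u hu _
  exact (dslope_neg_exp_neg_of_ne hu).symm

theorem hasDerivAt_Ein (y : ℝ) : HasDerivAt Ein (dslope (fun u => -exp (-u)) 0 y) y := by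
  rw [show Ein = _ from funext Ein_eq_integral_dslope]
  exact ((continuous_dslope (by fun_prop) 0).integral_hasStrictDerivAt 0 y).hasDerivAt

theorem continuous_Ein : Continuous Ein :=
  continuous_iff_continuousAt.2 fun y => (hasDerivAt_Ein y).continuousAt

theorem one_sub_exp_neg_mul_log_eq_dslope_mul (t : ℝ) :
    (1 - exp (-t)) * log t = dslope (fun u => -exp (-u)) 0 t * (t * log t) := by
  rcases eq_or_ne t 0 with rfl | ht
  · simp
  · rw [dslope_neg_exp_neg_of_ne ht]
    field_simp

theorem integral_exp_neg_mul_log {Y : ℝ} (hY : 0 ≤ Y) :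
    ∫ t in (0 : ℝ)..Y, exp (-t) * log t = (1 - exp (-Y)) * log Y - Ein Y := by
  have hcont : Continuous fun t => (1 - exp (-t)) * log t - Ein t := by
    simp_rw [one_sub_exp_neg_mul_log_eq_dslope_mul]
    exact ((continuous_dslope (by fun_prop) 0).mul continuous_mul_log).sub continuous_Ein
  have hderiv : ∀ t ∈ Ioo 0 Y, HasDerivAt (fun t => (1 - exp (-t)) * log t - Ein t)
      (exp (-t) * log t) t := by
    intro t ht
    have h := (((hasDerivAt_neg t).exp.const_sub 1).fun_mul (hasDerivAt_log ht.1.ne')).fun_sub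
      (hasDerivAt_Ein t)
    rw [dslope_neg_exp_neg_of_ne ht.1.ne'] at h
    exact h.congr_deriv (by ring)
  have hint : IntervalIntegrable (fun t => exp (-t) * log t) volume 0 Y :=
    (intervalIntegrable_iff_integrableOn_Ioc_of_le hY).2
      (integrableOn_exp_neg_mul_log_Ioi_zero.mono_set Ioc_subset_Ioi_self)
  rw [intervalIntegral.integral_eq_sub_of_hasDerivAt_of_le hY hcont.continuousOn hderiv hint]
  simp [Ein]

theorem tendsto_exp_neg_mul_log_atTop : Tendsto (fun Y => exp (-Y) * log Y) atTop (nhds 0) := by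
  refine squeeze_zero_norm' ?_ (by simpa using tendsto_pow_mul_exp_neg_atTop_nhds_zero 1)
  filter_upwards [eventually_ge_atTop 1] with Y hY
  rw [norm_mul, norm_of_nonneg (exp_pos _).le, norm_of_nonneg (log_nonneg hY), mul_comm]
  exact mul_le_mul_of_nonneg_right ((log_le_sub_one_of_pos (by linarith)).trans (by linarith))
    (exp_pos _).le

theorem tendsto_Ein_sub_log_atTop :
    Tendsto (fun Y => Ein Y - log Y) atTop (nhds γ) := by
  have h := intervalIntegral_tendsto_integral_Ioi 0 integrableOn_exp_neg_mul_log_Ioi_zero tendsto_id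
  rw [integral_exp_neg_mul_log_Ioi_zero] at h
  have hlim := h.neg.sub tendsto_exp_neg_mul_log_atTop
  simp only [neg_neg, sub_zero] at hlim
  refine hlim.congr' ?_
  filter_upwards [eventually_ge_atTop 0] with Y hY
  rw [id, integral_exp_neg_mul_log hY]
  ring

theorem integrableOn_exp_neg_div_Ioi {a : ℝ} (ha : 0 < a) :
    IntegrableOn (fun t => exp (-t) / t) (Ioi a) := by
  refine ((integrableOn_exp_neg_Ioi a).div_const a).mono' ?_ ?_
  · exact ((continuous_exp.comp continuous_neg).continuousOn.div continuousOn_id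
      fun t ht => (ha.trans ht).ne').aestronglyMeasurable measurableSet_Ioi
  · filter_upwards [ae_restrict_mem measurableSet_Ioi] with t ht
    rw [norm_of_nonneg (div_nonneg (exp_pos _).le (ha.trans ht).le)]
    exact div_le_div_of_nonneg_left (exp_pos _).le ha (le_of_lt ht)

theorem E₁_nonneg {y : ℝ} (hy : 0 ≤ y) : 0 ≤ E₁ y :=
  setIntegral_nonneg measurableSet_Ioi fun _ ht => div_nonneg (exp_pos _).le (hy.trans ht.le)

theorem E₁_le {y : ℝ} (hy : 0 < y) : E₁ y ≤ exp (-y) / y := by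
  rw [← integral_exp_neg_Ioi, ← integral_div]
  exact setIntegral_mono_on (integrableOn_exp_neg_div_Ioi hy)
    ((integrableOn_exp_neg_Ioi y).div_const y) measurableSet_Ioi
    fun _ ht => div_le_div_of_nonneg_left (exp_pos _).le hy (le_of_lt ht)

theorem Ein_eq_log_add_eulerMascheroniConstant_add_E₁ {y : ℝ} (hy : 0 < y) :
    Ein y = log y + γ + E₁ y := by
  have hderiv {t : ℝ} (ht : 0 < t) :
      HasDerivAt (fun t => Ein t - log t) (-(exp (-t) / t)) t := by
    have h := (hasDerivAt_Ein t).fun_sub (hasDerivAt_log ht.ne')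
    rw [dslope_neg_exp_neg_of_ne ht.ne'] at h
    exact h.congr_deriv (by field_simp; ring)
  have hdiff : ∀ Y ≥ y, Ein Y - log Y - (Ein y - log y) = -∫ t in y..Y, exp (-t) / t := by
    intro Y hY
    have hint : IntervalIntegrable (fun t => exp (-t) / t) volume y Y :=
      (intervalIntegrable_iff_integrableOn_Ioc_of_le hY).2
        ((integrableOn_exp_neg_div_Ioi hy).mono_set Ioc_subset_Ioi_self)
    rw [← intervalIntegral.integral_neg, intervalIntegral.integral_eq_sub_of_hasDerivAt
      (fun t ht => hderiv (hy.trans_le (uIcc_of_le hY ▸ ht).1)) hint.neg]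
  have hlim : Tendsto (fun Y => -∫ t in y..Y, exp (-t) / t) atTop (nhds (-E₁ y)) :=
    (intervalIntegral_tendsto_integral_Ioi y (integrableOn_exp_neg_div_Ioi hy) tendsto_id).neg
  have := tendsto_nhds_unique_of_eventuallyEq
    ((tendsto_Ein_sub_log_atTop).sub_const (Ein y - log y)) hlim
    (eventually_ge_atTop y |>.mono hdiff)
  linarith

theorem continuousOn_E₁ : ContinuousOn E₁ (Ioi 0) := by
  refine ((continuous_Ein.continuousOn.sub (continuousOn_log.mono fun y hy => ne_of_gt hy)).sub
    (continuousOn_const (c := γ))).congr fun y hy => ?_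
  simp only [Pi.sub_apply, Ein_eq_log_add_eulerMascheroniConstant_add_E₁ hy]
  ring

theorem integrableOn_E₁_div_Ioi_one : IntegrableOn (fun y => E₁ y / y) (Ioi 1) := by
  refine (integrableOn_exp_neg_Ioi 1).mono' ?_ ?_
  · exact (continuousOn_E₁.div continuousOn_id fun y hy => ne_of_gt hy).aestronglyMeasurable
      measurableSet_Ioi |>.mono_set (Ioi_subset_Ioi zero_le_one)
  · filter_upwards [ae_restrict_mem measurableSet_Ioi] with y (hy : 1 < y)
    have hy0 : 0 < y := zero_lt_one.trans hy
    rw [norm_of_nonneg (div_nonneg (E₁_nonneg hy0.le) hy0.le)]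
    calc E₁ y / y ≤ E₁ y := div_le_self (E₁_nonneg hy0.le) hy.le
      _ ≤ exp (-y) / y := E₁_le hy0
      _ ≤ exp (-y) := div_le_self (exp_pos _).le hy.le

theorem integral_Ein_div {x : ℝ} (hx : 0 < x) :
    ∫ y in (1 : ℝ)..x, Ein y / y
      = log x ^ 2 / 2 + γ * log x + ∫ y in (1 : ℝ)..x, E₁ y / y := by
  have hpos {y : ℝ} (hy : y ∈ uIcc 1 x) : 0 < y := (lt_min one_pos hx).trans_le hy.1
  have hmain : ∀ y ∈ uIcc 1 x, HasDerivAt (fun y => log y ^ 2 / 2 + γ * log y)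
      ((log y + γ) / y) y := by
    intro y hy
    have h := (((hasDerivAt_log (hpos hy).ne').pow 2).div_const 2).add
      ((hasDerivAt_log (hpos hy).ne').const_mul γ)
    exact h.congr_deriv (by field_simp; ring)
  have hmain_int : IntervalIntegrable (fun y => (log y + γ) / y) volume 1 x :=
    ContinuousOn.intervalIntegrable fun y hy =>
      (((continuousAt_log (hpos hy).ne').add continuousAt_const).div continuousAt_id
        (hpos hy).ne').continuousWithinAt
  have hrem_int : IntervalIntegrable (fun y => E₁ y / y) volume 1 x :=
    ((continuousOn_E₁.div continuousOn_id fun y hy => ne_of_gt hy).mono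
      fun _ hy => hpos hy).intervalIntegrable
  rw [intervalIntegral.integral_congr (g := fun y => (log y + γ) / y + E₁ y / y)
    fun y hy => by simp only [Ein_eq_log_add_eulerMascheroniConstant_add_E₁ (hpos hy), add_div],
    intervalIntegral.integral_add hmain_int hrem_int,
    intervalIntegral.integral_eq_sub_of_hasDerivAt hmain hmain_int]
  simp

/-- Logarithmic integral asymptotics of the centering: with
`Φ(t) = ∫_0^t (1-e^{-y})/y dy`, the quantity
`∫_1^n Φ(y)/y dy - (log n)²/2 - γ log n` converges to a finite limit as `n → ∞`
(`γ` the Euler–Mascheroni constant); in particular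
`∫_1^n Φ(y)/y dy = (log n)²/2 + γ log n + o(log n)`. -/
theorem centering_integral_asymptotics :
    ∃ L : ℝ, Tendsto (fun n : ℕ =>
        (∫ y in (1 : ℝ)..(n : ℝ),
          (∫ u in (0 : ℝ)..y, (1 - Real.exp (-u)) / u) / y)
        - (Real.log n) ^ 2 / 2 - Real.eulerMascheroniConstant * Real.log n)
      atTop (nhds L) := by
  refine ⟨∫ y in Ioi 1, E₁ y / y,
    (intervalIntegral_tendsto_integral_Ioi 1 integrableOn_E₁_div_Ioi_one
      tendsto_natCast_atTop_atTop).congr' ?_⟩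
  filter_upwards [eventually_gt_atTop 0] with n hn
  show _ = (∫ y in (1 : ℝ)..(n : ℝ), Ein y / y) - _ - _
  rw [integral_Ein_div (Nat.cast_pos.2 hn)]
  ring
end
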